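/- Let m be a positive integer and let α ∈ F_{2^m} be such that x³ + x + α has no root in F_{2^m}. Let F : F_{2^m} × F_{2^m} → F_{2^m} × F_{2^m} be defined by F(x, y) = (x³ + x·y² + α·y³, x⁵ + α·x⁴·y + (1+α²)·x·y⁴ + α·y⁵). Then F is 3-to-1: the preimage of (0,0) under F is exactly {(0,0)}, and for every nonzero element b in the image of F, the preimage F^{−1}(b) has exactly 3 elements. -/

import Mathlib

/-!
Let `θ` and `θ' = θ + α` be the roots of `t² + αt + 1` (in `K` or in its quadratic extension) and
put `z = x + yθ`, `w = x + yθ'`. Then `x² + αxy + y² = zw` and `α(x³ + xy² + αy³) = θ'z³ + θw³`,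
and in characteristic 2 the second coordinate of `F` is the product of the two forms. For two
points with the same image, `(θ'Z³, θW³)` and `(θ'z³, θw³)` have the same sum and product, so
either `Z³ = z³, W³ = w³`, or `Z³ = θ²w³, W³ = θ'²z³`. The latter would make `θ` a cube `ζ³`, and
then `ζ + ζ⁻¹` would be a root of `x³ + x + α`. Hence `(Z, W) = (rz, r²w)` with `r³ = 1`.

These three points are the orbit of `(x, y)` under a linear map of order 3 as soon as a primitive
cube root of unity has the form `a + θ/α` with `a ∈ K`. If `θ ∈ K` this holds because cubing on `K`
is not surjective. Otherwise a cube root of unity in `K` would make cubing bijective on the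
norm-one group of `K(θ)`, and `θ`, which has norm one, would be the cube of an element of norm one.
-/

open scoped QuadraticAlgebra

namespace ThreeToOne

section CommRing

variable {R : Type*} [CommRing R]

def cubicForm (α : R) (p : R × R) : R := p.1 ^ 3 + p.1 * p.2 ^ 2 + α * p.2 ^ 3

def quadForm (α : R) (p : R × R) : R := p.1 ^ 2 + α * p.1 * p.2 + p.2 ^ 2

def linForm (θ : R) (p : R × R) : R := p.1 + p.2 * θ

/-- Multiplication by `a + βθ` in the coordinates `x + yθ`, where `θ² + αθ + 1 = 0` and `αβ = 1`;
then `a + βθ` is a primitive cube root of unity iff `a² + a + 1 + β² = 0`. -/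
def rotate (a β : R) (p : R × R) : R × R := (a * p.1 + β * p.2, β * p.1 + (a + 1) * p.2)

variable {α a β θ : R}

theorem cubicForm_rotate (h2 : (2 : R) = 0) (hαβ : α * β = 1) (ha : a ^ 2 + a + 1 + β ^ 2 = 0)
    (p : R × R) : cubicForm α (rotate a β p) = cubicForm α p := by
  simp only [cubicForm, rotate]
  grind

theorem quadForm_rotate (h2 : (2 : R) = 0) (hαβ : α * β = 1) (ha : a ^ 2 + a + 1 + β ^ 2 = 0)
    (p : R × R) : quadForm α (rotate a β p) = quadForm α p := by
  simp only [quadForm, rotate]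
  grind

theorem rotate_rotate_rotate (h2 : (2 : R) = 0) (ha : a ^ 2 + a + 1 + β ^ 2 = 0) (p : R × R) :
    rotate a β (rotate a β (rotate a β p)) = p := by
  ext <;> simp only [rotate] <;> grind

theorem eq_zero_of_rotate_eq_self (h2 : (2 : R) = 0) (ha : a ^ 2 + a + 1 + β ^ 2 = 0)
    {p : R × R} (hp : rotate a β p = p) : p = 0 := by
  obtain ⟨h1, h1'⟩ := Prod.ext_iff.1 hp
  simp only [rotate] at h1 h1'
  refine Prod.ext ?_ ?_ <;> simp only [Prod.fst_zero, Prod.snd_zero] <;> grind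

theorem quadForm_eq_mul (h2 : (2 : R) = 0) (hθ : θ ^ 2 + α * θ + 1 = 0) (p : R × R) :
    quadForm α p = linForm θ p * linForm (θ + α) p := by
  simp only [quadForm, linForm]
  linear_combination (-p.2 ^ 2) * hθ + (p.2 ^ 2 - p.1 * p.2 * θ) * h2

theorem linForm_rotate (h2 : (2 : R) = 0) (hθ : θ ^ 2 + α * θ + 1 = 0) (hαβ : α * β = 1)
    (p : R × R) : linForm θ (rotate a β p) = (a + β * θ) * linForm θ p := by
  simp only [linForm, rotate]
  linear_combination (-β * p.2) * hθ + (θ * p.2) * hαβ + (β * p.2 + θ * p.2) * h2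

theorem linForm_mul_cubicForm (h2 : (2 : R) = 0) (hθ : θ ^ 2 + α * θ + 1 = 0) (p : R × R) :
    (θ + α) * linForm θ p ^ 3 + θ * linForm (θ + α) p ^ 3 = α * cubicForm α p := by
  simp only [linForm, cubicForm]
  grind

theorem cubicForm_map {S : Type*} [CommRing S] (φ : R →+* S) (p : R × R) :
    cubicForm (φ α) (Prod.map φ φ p) = φ (cubicForm α p) := by
  simp [cubicForm]

theorem quadForm_map {S : Type*} [CommRing S] (φ : R →+* S) (p : R × R) :
    quadForm (φ α) (Prod.map φ φ p) = φ (quadForm α p) := by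
  simp [quadForm]

theorem rotate_map {S : Type*} [CommRing S] (φ : R →+* S) (p : R × R) :
    rotate (φ a) (φ β) (Prod.map φ φ p) = Prod.map φ φ (rotate a β p) := by
  simp [rotate]

theorem ncard_orbit (h2 : (2 : R) = 0) (ha : a ^ 2 + a + 1 + β ^ 2 = 0) {p : R × R} (hp : p ≠ 0) :
    ({p, rotate a β p, rotate a β (rotate a β p)} : Set (R × R)).ncard = 3 := by
  have h1 : rotate a β p ≠ p := fun h => hp (eq_zero_of_rotate_eq_self h2 ha h)
  have h2' : rotate a β (rotate a β p) ≠ p := fun h => h1 <| by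
    simpa only [h] using rotate_rotate_rotate h2 ha p
  refine Set.ncard_eq_three.2 ⟨_, _, _, h1.symm, h2'.symm, fun h => h2' ?_, rfl⟩
  have h' := congrArg (rotate a β) h
  rw [rotate_rotate_rotate h2 ha] at h'
  exact h'

theorem add_cubic_eq_zero (h2 : (2 : R) = 0) (hθ : θ ^ 2 + α * θ + 1 = 0) {ζ η : R}
    (hζη : ζ * η = 1) (hζ : ζ ^ 3 = θ) : (ζ + η) ^ 3 + (ζ + η) + α = 0 := by
  grind

end CommRing

section Field

variable {K : Type*} [Field K] {α θ : K}

theorem eq_one_or_eq_or_eq_sq_of_pow_three_eq_one {j r : K} (hj : j ^ 2 + j + 1 = 0)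
    (hr : r ^ 3 = 1) : r = 1 ∨ r = j ∨ r = j ^ 2 := by
  have key : (r - 1) * (r - j) * (r - j ^ 2) = 0 := by
    linear_combination hr + (r - 1) * (j - 1 - r) * hj
  simpa only [mul_eq_zero, sub_eq_zero, or_assoc] using key

theorem exists_sq_add_self_add_one_eq_zero [Finite K]
    (h : ¬ Function.Surjective fun ζ : K => ζ ^ 3) : ∃ j : K, j ^ 2 + j + 1 = 0 := by
  obtain ⟨x, y, hxy, hne⟩ := Function.not_injective_iff.1 (mt Finite.injective_iff_surjective.1 h)
  have hxy : x ^ 3 = y ^ 3 := hxy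
  have hy : y ≠ 0 := by
    rintro rfl
    exact hne (pow_eq_zero_iff three_ne_zero |>.1 (by simpa using hxy))
  have hcube : (x / y) ^ 3 = 1 := by rw [div_pow, hxy, div_self (pow_ne_zero 3 hy)]
  have hne' : x / y - 1 ≠ 0 := by rwa [sub_ne_zero, Ne, div_eq_one_iff_eq hy]
  exact ⟨x / y, (mul_eq_zero.1 (by linear_combination hcube :
    (x / y - 1) * ((x / y) ^ 2 + x / y + 1) = 0)).resolve_left hne'⟩

theorem not_cube_of_root (h2 : (2 : K) = 0) (hα : ∀ x : K, x ^ 3 + x + α ≠ 0)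
    (hθ : θ ^ 2 + α * θ + 1 = 0) (ζ : K) : ζ ^ 3 ≠ θ := by
  intro hζ
  have hζ0 : ζ ≠ 0 := by
    rintro rfl
    rw [← hζ] at hθ
    simp at hθ
  exact hα _ (add_cubic_eq_zero h2 hθ (mul_inv_cancel₀ hζ0) hζ)

theorem eq_zero_of_pow_three_eq_sq_mul (hcube : ∀ ζ : K, ζ ^ 3 ≠ θ) (hθ : θ ≠ 0) {A B : K}
    (h : A ^ 3 = θ ^ 2 * B ^ 3) : B = 0 := by
  by_contra hB
  have hA : A ≠ 0 := by
    rintro rfl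
    simp [hθ, hB] at h
  apply hcube (θ * B / A)
  field_simp
  exact h.symm

theorem eq_and_eq_or_eq_and_eq_of_add_eq_add_of_mul_eq_mul {x y x' y' : K}
    (hs : x + y = x' + y') (hp : x * y = x' * y') : (x = x' ∧ y = y') ∨ (x = y' ∧ y = x') := by
  have key : (x - x') * (x - y') = 0 := by linear_combination x * hs - hp
  rcases mul_eq_zero.1 key with h | h
  · exact Or.inl ⟨sub_eq_zero.1 h, by linear_combination hs - h⟩
  · exact Or.inr ⟨sub_eq_zero.1 h, by linear_combination hs - h⟩

theorem exists_pow_three_eq_one_of_pow_three_eq {z w Z W : K} (hZ : Z ^ 3 = z ^ 3)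
    (hW : W ^ 3 = w ^ 3) (hZW : Z * W = z * w) :
    ∃ r : K, r ^ 3 = 1 ∧ Z = r * z ∧ W = r ^ 2 * w := by
  by_cases hz : z = 0
  · subst hz
    have hZ0 : Z = 0 := pow_eq_zero_iff three_ne_zero |>.1 (by simpa using hZ)
    by_cases hw : w = 0
    · subst hw
      exact ⟨1, one_pow 3, by simp [hZ0], by simpa using hW⟩
    refine ⟨(W / w) ^ 2, ?_, by simp [hZ0], ?_⟩
    · rw [← pow_mul, mul_comm, pow_mul, div_pow, hW, div_self (pow_ne_zero 3 hw), one_pow]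
    · field_simp
      linear_combination (-W) * hW
  · refine ⟨Z / z, ?_, by field_simp, ?_⟩
    · rw [div_pow, hZ, div_self (pow_ne_zero 3 hz)]
    · have hZ0 : Z ≠ 0 := by
        rintro rfl
        exact hz (pow_eq_zero_iff three_ne_zero |>.1 (by simpa using hZ.symm))
      rw [div_pow, div_mul_eq_mul_div, eq_div_iff (pow_ne_zero 2 hz)]
      exact mul_left_cancel₀ hZ0 (by linear_combination z ^ 2 * hZW - w * hZ)

theorem eq_of_linForm_eq (hα : α ≠ 0) {p q : K × K} (h : linForm θ p = linForm θ q)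
    (h' : linForm (θ + α) p = linForm (θ + α) q) : p = q := by
  simp only [linForm] at h h'
  have h2 : p.2 = q.2 := mul_left_cancel₀ hα (by linear_combination h' - h)
  exact Prod.ext (by linear_combination h - θ * h2) h2

theorem pow_three_linForm_eq_of_forms_eq (h2 : (2 : K) = 0) (hθ : θ ^ 2 + α * θ + 1 = 0)
    (hcube : ∀ ζ : K, ζ ^ 3 ≠ θ) (hα : α ≠ 0) {p q : K × K} (hp : p ≠ 0)
    (hc : cubicForm α q = cubicForm α p) (hq : quadForm α q = quadForm α p) :
    linForm θ q ^ 3 = linForm θ p ^ 3 ∧ linForm (θ + α) q ^ 3 = linForm (θ + α) p ^ 3 := by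
  have hθθ' : θ * (θ + α) = 1 := by linear_combination hθ - h2
  have hθ0 : θ ≠ 0 := left_ne_zero_of_mul_eq_one hθθ'
  have hθ'0 : θ + α ≠ 0 := right_ne_zero_of_mul_eq_one hθθ'
  set z := linForm θ p
  set w := linForm (θ + α) p
  set Z := linForm θ q
  set W := linForm (θ + α) q
  have hsum : (θ + α) * Z ^ 3 + θ * W ^ 3 = (θ + α) * z ^ 3 + θ * w ^ 3 := by
    rw [linForm_mul_cubicForm h2 hθ, linForm_mul_cubicForm h2 hθ, hc]
  have hZW : Z * W = z * w := by rw [← quadForm_eq_mul h2 hθ, ← quadForm_eq_mul h2 hθ, hq]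
  have hprod : (θ + α) * Z ^ 3 * (θ * W ^ 3) = (θ + α) * z ^ 3 * (θ * w ^ 3) := by
    linear_combination θ * (θ + α) * (Z ^ 2 * W ^ 2 + Z * W * z * w + z ^ 2 * w ^ 2) * hZW
  rcases eq_and_eq_or_eq_and_eq_of_add_eq_add_of_mul_eq_mul hsum hprod with ⟨h, h'⟩ | ⟨h, h'⟩
  · exact ⟨mul_left_cancel₀ hθ'0 h, mul_left_cancel₀ hθ0 h'⟩
  exfalso
  have hw : w = 0 :=
    eq_zero_of_pow_three_eq_sq_mul hcube hθ0 (A := Z) (by linear_combination θ * h - Z ^ 3 * hθθ')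
  have hW : W = 0 :=
    eq_zero_of_pow_three_eq_sq_mul hcube hθ0 (A := z) <| by
      linear_combination (-θ) * h' - z ^ 3 * hθθ'
  have hz : z = 0 := pow_eq_zero_iff three_ne_zero |>.1 <|
    mul_left_cancel₀ hθ'0 (by rw [← h', hW]; ring)
  exact hp (eq_of_linForm_eq hα (hz.trans (by simp [linForm])) (hw.trans (by simp [linForm])))

theorem eq_rotate_of_forms_eq_of_not_cube (h2 : (2 : K) = 0) (hθ : θ ^ 2 + α * θ + 1 = 0)
    (hcube : ∀ ζ : K, ζ ^ 3 ≠ θ) {a β : K} (hαβ : α * β = 1) (ha : a ^ 2 + a + 1 + β ^ 2 = 0)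
    {p q : K × K} (hp : p ≠ 0) (hc : cubicForm α q = cubicForm α p)
    (hq : quadForm α q = quadForm α p) :
    q = p ∨ q = rotate a β p ∨ q = rotate a β (rotate a β p) := by
  have hα : α ≠ 0 := left_ne_zero_of_mul_eq_one hαβ
  have hθ' : (θ + α) ^ 2 + α * (θ + α) + 1 = 0 := by linear_combination hθ + (α * θ + α ^ 2) * h2
  have hj : (a + β * θ) ^ 2 + (a + β * θ) + 1 = 0 := by
    linear_combination ha + β ^ 2 * hθ - β * θ * hαβ + (a * β * θ - β ^ 2) * h2
  have hj' : a + β * (θ + α) = (a + β * θ) ^ 2 := by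
    linear_combination hαβ - hj + (a + β * θ + 1) * h2
  have hσ := linForm_rotate (a := a) h2 hθ hαβ
  have hσ' := linForm_rotate (a := a) h2 hθ' hαβ
  obtain ⟨hZ, hW⟩ := pow_three_linForm_eq_of_forms_eq h2 hθ hcube hα hp hc hq
  obtain ⟨r, hr, hZr, hWr⟩ := exists_pow_three_eq_one_of_pow_three_eq hZ hW
    (by rw [← quadForm_eq_mul h2 hθ, ← quadForm_eq_mul h2 hθ, hq])
  rcases eq_one_or_eq_or_eq_sq_of_pow_three_eq_one hj hr with rfl | rfl | rfl
  · exact .inl <| eq_of_linForm_eq hα (by rw [hZr, one_mul]) (by rw [hWr]; ring)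
  · exact .inr <| .inl <| eq_of_linForm_eq hα (by rw [hZr, hσ]) (by rw [hWr, hσ', hj'])
  · refine .inr <| .inr <| eq_of_linForm_eq hα (by rw [hZr, hσ, hσ]; ring) ?_
    rw [hWr, hσ', hσ', hj']
    ring

end Field

section QuadraticExtension

variable {K : Type*} [Field K] {α : K}

theorem two_eq_zero_quadraticAlgebra (h2 : (2 : K) = 0) : (2 : QuadraticAlgebra K 1 α) = 0 := by
  rw [← map_ofNat (algebraMap K (QuadraticAlgebra K 1 α)) 2, h2, map_zero]

theorem omega_sq_add (h2 : (2 : K) = 0) :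
    (ω : QuadraticAlgebra K 1 α) ^ 2 + algebraMap K _ α * ω + 1 = 0 := by
  rw [sq, QuadraticAlgebra.omega_mul_omega_eq_add, one_smul, Algebra.smul_def]
  linear_combination (1 + algebraMap K _ α * ω) * two_eq_zero_quadraticAlgebra h2

theorem norm_omega (h2 : (2 : K) = 0) : QuadraticAlgebra.norm (ω : QuadraticAlgebra K 1 α) = 1 := by
  simp only [QuadraticAlgebra.norm_def, QuadraticAlgebra.omega_re, QuadraticAlgebra.omega_im]
  linear_combination -h2

theorem norm_ne_one_of_pow_three_eq_omega (h2 : (2 : K) = 0) (hα : ∀ x : K, x ^ 3 + x + α ≠ 0)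
    {t : QuadraticAlgebra K 1 α} (ht : t ^ 3 = ω) : QuadraticAlgebra.norm t ≠ 1 := by
  intro hn
  have htt : t * star t = 1 := by
    rw [← QuadraticAlgebra.algebraMap_norm_eq_mul_star, hn, map_one]
  apply hα (QuadraticAlgebra.trace t)
  apply (algebraMap K (QuadraticAlgebra K 1 α)).injective
  simpa [QuadraticAlgebra.algebraMap_trace_eq_add_star] using
    add_cubic_eq_zero (two_eq_zero_quadraticAlgebra h2) (omega_sq_add h2) htt ht

theorem omega_not_cube (h2 : (2 : K) = 0) (hα : ∀ x : K, x ^ 3 + x + α ≠ 0)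
    (ζ : QuadraticAlgebra K 1 α) : ζ ^ 3 ≠ ω := by
  intro hζ
  -- `ν ζ` is a cube root of `ω` of norm `ν³ = 1`
  set ν := QuadraticAlgebra.norm ζ
  have hν : ν ^ 3 = 1 := by rw [← map_pow, hζ, norm_omega h2]
  apply norm_ne_one_of_pow_three_eq_omega h2 hα (t := algebraMap K _ ν * ζ)
  · rw [mul_pow, hζ, ← map_pow, hν, map_one, one_mul]
  · rw [map_mul, QuadraticAlgebra.norm_algebraMap, ← pow_succ, hν]

theorem not_sq_add_self_add_one_eq_zero [Finite K] (h2 : (2 : K) = 0)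
    (hα : ∀ x : K, x ^ 3 + x + α ≠ 0) (hirr : ∀ r : K, r ^ 2 ≠ 1 + α * r) (c : K) :
    c ^ 2 + c + 1 ≠ 0 := by
  intro hc
  have : Fact (∀ r : K, r ^ 2 ≠ 1 + α * r) := ⟨hirr⟩
  let E := QuadraticAlgebra K 1 α
  have : Finite E := Module.finite_of_finite K
  -- the cube roots of unity `1, c, c²` lie in `K`, and only `1` has norm one
  have hinj : Function.Injective (powMonoidHom 3 : unitary E →* unitary E) := by
    rw [injective_iff_map_eq_one]
    intro r hr
    have hr3 : (r : E) ^ 3 = 1 := congrArg Subtype.val hr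
    have hr1 : QuadraticAlgebra.norm (r : E) = 1 :=
      QuadraticAlgebra.norm_eq_one_iff_mem_unitary.2 r.2
    have hc' : (algebraMap K E c) ^ 2 + algebraMap K E c + 1 = 0 := by
      simpa using congrArg (algebraMap K E) hc
    rcases eq_one_or_eq_or_eq_sq_of_pow_three_eq_one hc' hr3 with h | h | h
    · exact Subtype.ext h
    · rw [h, QuadraticAlgebra.norm_algebraMap] at hr1
      have : (1 : K) = 0 := by linear_combination (-c) * hc + (c + 1) * hr1 + (c + 1) * h2
      exact absurd this one_ne_zero
    · rw [h, ← map_pow, QuadraticAlgebra.norm_algebraMap] at hr1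
      exact absurd (by grind : (1 : K) = 0) one_ne_zero
  obtain ⟨t, ht⟩ := Finite.injective_iff_surjective.1 hinj
    ⟨ω, QuadraticAlgebra.norm_eq_one_iff_mem_unitary.1 (norm_omega h2)⟩
  exact norm_ne_one_of_pow_three_eq_omega h2 hα (congrArg Subtype.val ht)
    (QuadraticAlgebra.norm_eq_one_iff_mem_unitary.2 t.2)

theorem exists_rotate_params_of_irreducible [Finite K] (h2 : (2 : K) = 0)
    (hα : ∀ x : K, x ^ 3 + x + α ≠ 0) (hirr : ∀ r : K, r ^ 2 ≠ 1 + α * r) :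
    ∃ a β : K, α * β = 1 ∧ a ^ 2 + a + 1 + β ^ 2 = 0 := by
  have : Fact (∀ r : K, r ^ 2 ≠ 1 + α * r) := ⟨hirr⟩
  have : Finite (QuadraticAlgebra K 1 α) := Module.finite_of_finite K
  obtain ⟨j, hj⟩ := exists_sq_add_self_add_one_eq_zero fun h =>
    omega_not_cube h2 hα _ (h (ω : QuadraticAlgebra K 1 α)).choose_spec
  have hre := congrArg QuadraticAlgebra.re hj
  have him := congrArg QuadraticAlgebra.im hj
  simp only [sq, QuadraticAlgebra.re_add, QuadraticAlgebra.re_mul, QuadraticAlgebra.re_one,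
    QuadraticAlgebra.im_add, QuadraticAlgebra.im_mul, QuadraticAlgebra.im_one,
    QuadraticAlgebra.re_zero, QuadraticAlgebra.im_zero] at hre him
  have hj0 : j.im ≠ 0 := fun h0 =>
    not_sq_add_self_add_one_eq_zero h2 hα hirr j.re (by simpa [h0, sq] using hre)
  refine ⟨j.re, j.im, mul_left_cancel₀ hj0 ?_, by linear_combination hre⟩
  linear_combination him - j.re * j.im * h2 - j.im * h2

theorem exists_rotate_params [Finite K] (h2 : (2 : K) = 0) (hα : ∀ x : K, x ^ 3 + x + α ≠ 0) :
    ∃ a β : K, α * β = 1 ∧ a ^ 2 + a + 1 + β ^ 2 = 0 := by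
  by_cases hsplit : ∃ θ : K, θ ^ 2 + α * θ + 1 = 0
  · obtain ⟨θ, hθ⟩ := hsplit
    obtain ⟨j, hj⟩ := exists_sq_add_self_add_one_eq_zero fun h =>
      not_cube_of_root h2 hα hθ _ (h θ).choose_spec
    have hα0 : α ≠ 0 := by
      rintro rfl
      exact hα 0 (by ring)
    refine ⟨j + θ / α, α⁻¹, mul_inv_cancel₀ hα0, ?_⟩
    field_simp
    linear_combination α ^ 2 * hj + hθ + (θ * j * α) * h2
  · simp only [not_exists] at hsplit
    exact exists_rotate_params_of_irreducible h2 hα fun r hr =>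
      hsplit r (by linear_combination hr + (1 + α * r) * h2)

theorem eq_rotate_of_forms_eq (h2 : (2 : K) = 0) (hα : ∀ x : K, x ^ 3 + x + α ≠ 0) {a β : K}
    (hαβ : α * β = 1) (ha : a ^ 2 + a + 1 + β ^ 2 = 0) {p q : K × K} (hp : p ≠ 0)
    (hc : cubicForm α q = cubicForm α p) (hq : quadForm α q = quadForm α p) :
    q = p ∨ q = rotate a β p ∨ q = rotate a β (rotate a β p) := by
  by_cases hsplit : ∃ θ : K, θ ^ 2 + α * θ + 1 = 0
  · obtain ⟨θ, hθ⟩ := hsplit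
    exact eq_rotate_of_forms_eq_of_not_cube h2 hθ (not_cube_of_root h2 hα hθ) hαβ ha hp hc hq
  simp only [not_exists] at hsplit
  have : Fact (∀ r : K, r ^ 2 ≠ 1 + α * r) :=
    ⟨fun r hr => hsplit r (by linear_combination hr + (1 + α * r) * h2)⟩
  let φ := algebraMap K (QuadraticAlgebra K 1 α)
  have hφ : Function.Injective (Prod.map φ φ) := Prod.map_injective.2 ⟨φ.injective, φ.injective⟩
  have hφp : Prod.map φ φ p ≠ 0 := fun h =>
    hp (hφ (h.trans (Prod.ext (map_zero φ).symm (map_zero φ).symm)))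
  have key := eq_rotate_of_forms_eq_of_not_cube (a := φ a) (β := φ β) (q := Prod.map φ φ q)
    (two_eq_zero_quadraticAlgebra h2) (omega_sq_add h2) (omega_not_cube h2 hα)
    (by rw [← map_mul, hαβ, map_one]) (by simpa using congrArg φ ha) hφp
    (by rw [cubicForm_map, cubicForm_map, hc]) (by rw [quadForm_map, quadForm_map, hq])
  simpa only [rotate_map, hφ.eq_iff] using key

end QuadraticExtension

theorem forms_eq_iff_mem_orbit {K : Type*} [Field K] (h2 : (2 : K) = 0) {α a β : K}
    (hα : ∀ x : K, x ^ 3 + x + α ≠ 0) (hαβ : α * β = 1) (ha : a ^ 2 + a + 1 + β ^ 2 = 0)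
    {p q : K × K} (hp : p ≠ 0) :
    cubicForm α q = cubicForm α p ∧ quadForm α q = quadForm α p ↔
      q ∈ ({p, rotate a β p, rotate a β (rotate a β p)} : Set (K × K)) := by
  refine ⟨fun ⟨hc, hq⟩ => eq_rotate_of_forms_eq h2 hα hαβ ha hp hc hq, ?_⟩
  rintro (rfl | rfl | rfl)
  · exact ⟨rfl, rfl⟩
  · exact ⟨cubicForm_rotate h2 hαβ ha p, quadForm_rotate h2 hαβ ha p⟩
  · simp only [cubicForm_rotate h2 hαβ ha, quadForm_rotate h2 hαβ ha, and_self]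

theorem cubicForm_eq_zero_iff {K : Type*} [Field K] {α : K} (hα : ∀ x : K, x ^ 3 + x + α ≠ 0)
    {p : K × K} : cubicForm α p = 0 ↔ p = 0 := by
  refine ⟨fun h => ?_, by rintro rfl; simp [cubicForm]⟩
  obtain ⟨x, y⟩ := p
  by_cases hy : y = 0
  · subst hy
    simpa [cubicForm] using h
  · refine (hα (x / y) ?_).elim
    rw [show (x / y) ^ 3 + x / y + α = cubicForm α (x, y) / y ^ 3 by
      simp only [cubicForm]; field_simp, h, zero_div]

end ThreeToOne

open ThreeToOne in
theorem stmt_14_general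
    (K : Type*) [Field K] [Fintype K] [CharP K 2]
    (α : K) (hα : ∀ x : K, x ^ 3 + x + α ≠ 0)
    (F : K × K → K × K)
    (hF : ∀ x y : K, F (x, y) =
      (x ^ 3 + x * y ^ 2 + α * y ^ 3,
       x ^ 5 + α * x ^ 4 * y + (1 + α ^ 2) * x * y ^ 4 + α * y ^ 5)) :
    F ⁻¹' {(0, 0)} = {(0, 0)} ∧
    ∀ b : K × K, b ∈ Set.range F → b ≠ (0, 0) → (F ⁻¹' {b}).ncard = 3 := by
  have h2 : (2 : K) = 0 := by exact_mod_cast CharP.cast_eq_zero K 2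
  have hF' : ∀ p, F p = (cubicForm α p, cubicForm α p * quadForm α p) := by
    rintro ⟨x, y⟩
    rw [hF, cubicForm, quadForm, Prod.mk.injEq]
    exact ⟨rfl, by linear_combination (-(x ^ 3 * y ^ 2) - α * x ^ 2 * y ^ 3) * h2⟩
  obtain ⟨a, β, hαβ, ha⟩ := exists_rotate_params h2 hα
  refine ⟨Set.ext fun p => ?_, ?_⟩
  · rw [Set.mem_preimage, Set.mem_singleton_iff, Set.mem_singleton_iff, hF', Prod.mk.injEq,
      ← Prod.zero_eq_mk, ← cubicForm_eq_zero_iff hα]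
    exact ⟨And.left, fun h => ⟨h, by rw [h, zero_mul]⟩⟩
  rintro _ ⟨p, rfl⟩ hb
  have hc : cubicForm α p ≠ 0 := fun h => hb (by rw [hF', h, zero_mul])
  have hp : p ≠ 0 := (cubicForm_eq_zero_iff hα).not.1 hc
  have hfiber : F ⁻¹' {F p} = {p, rotate a β p, rotate a β (rotate a β p)} := by
    ext q
    rw [Set.mem_preimage, Set.mem_singleton_iff, hF', hF', Prod.mk.injEq,
      ← forms_eq_iff_mem_orbit h2 hα hαβ ha hp]
    refine and_congr_right fun hcq => ?_
    rw [hcq, mul_right_inj' hc]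
  rw [hfiber, ncard_orbit h2 ha hp]

/-- With x³ + x + α rootless in F_{2^m}, the map
F(x,y) = (x³ + x·y² + α·y³, x⁵ + α·x⁴·y + (1+α²)·x·y⁴ + α·y⁵) is 3-to-1:
F⁻¹((0,0)) = {(0,0)} and every nonzero b in the image of F has exactly 3 preimages. -/
theorem stmt_14 (m : ℕ) (hm : 0 < m)
    (K : Type*) [Field K] [Fintype K] [CharP K 2] (hcard : Fintype.card K = 2 ^ m)
    (α : K) (hα : ∀ x : K, x ^ 3 + x + α ≠ 0)
    (F : K × K → K × K)
    (hF : ∀ x y : K, F (x, y) =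
      (x ^ 3 + x * y ^ 2 + α * y ^ 3,
       x ^ 5 + α * x ^ 4 * y + (1 + α ^ 2) * x * y ^ 4 + α * y ^ 5)) :
    F ⁻¹' {(0, 0)} = {(0, 0)} ∧
    ∀ b : K × K, b ∈ Set.range F → b ≠ (0, 0) → (F ⁻¹' {b}).ncard = 3 :=
  stmt_14_general K α hα F hF
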